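/- Uniform contraction of powers of the BDF3 companion matrix: let 0 < s₀ < 1/11 and let M(s) be the real 3×3 matrix with rows (18s, −9s, 2s), (1, 0, 0), (0, 1, 0). There exist an integer n₀ ≥ 1 and a constant ε₀ ∈ (0,1), both depending only on s₀, such that for every s ∈ (0, s₀] and every x ∈ ℝ³ with |x| = 1, one has |M(s)^{n₀} x| ≤ ε₀. -/

import Mathlib

/-! The eigenvalues of `M s` are the roots of `λ³ - 18sλ² + 9sλ - 2s`, and for `0 ≤ s < 1/11`
they all lie in the open unit disc (at `s = 1/11` the root `λ = 1` appears). By Gelfand's formula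
some power of the complexified matrix then has operator norm `< 1/2`; such a bound is an open
condition in `s` and survives passing to multiples of the exponent, so compactness of `[0, s₀]`
yields one exponent that works for all `s`. -/

noncomputable section

/-- The BDF3 companion matrix with rows `(18s, -9s, 2s)`, `(1,0,0)`, `(0,1,0)`. -/
def M (s : ℝ) : Matrix (Fin 3) (Fin 3) ℝ :=
  !![18 * s, -9 * s, 2 * s; 1, 0, 0; 0, 1, 0]

/-- The Euclidean norm on `ℝ³`. -/
def enorm3 (v : Fin 3 → ℝ) : ℝ := Real.sqrt (∑ i, v i ^ 2)

open Matrix Filter Topology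
open scoped Matrix.Norms.L2Operator

theorem tendsto_pow_atTop_nhds_zero_of_spectralRadius_lt_one {A : Type*} [NormedRing A]
    [NormedAlgebra ℂ A] [CompleteSpace A] {a : A} (h : spectralRadius ℂ a < 1) :
    Tendsto (fun n : ℕ => a ^ n) atTop (𝓝 0) := by
  obtain ⟨r, hρr, hr1⟩ := ENNReal.lt_iff_exists_nnreal_btwn.mp h
  have hle : ∀ᶠ n : ℕ in atTop, ‖a ^ n‖ ≤ (r : ℝ) ^ n := by
    filter_upwards [(spectrum.pow_norm_pow_one_div_tendsto_nhds_spectralRadius a).eventually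
      (gt_mem_nhds hρr), eventually_ne_atTop 0] with n hn hn0
    rw [← ENNReal.ofReal_coe_nnreal, ENNReal.ofReal_lt_ofReal_iff_of_nonneg (by positivity)] at hn
    calc ‖a ^ n‖ = (‖a ^ n‖ ^ (1 / n : ℝ)) ^ n := by
          rw [one_div, Real.rpow_inv_natCast_pow (norm_nonneg _) hn0]
      _ ≤ (r : ℝ) ^ n := pow_le_pow_left₀ (by positivity) hn.le n
  exact squeeze_zero_norm' hle (tendsto_pow_atTop_nhds_zero_of_lt_one r.2 (mod_cast hr1))

theorem exists_pos_norm_pow_lt_of_spectralRadius_lt_one {A : Type*} [NormedRing A]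
    [NormedAlgebra ℂ A] [CompleteSpace A] {a : A} (h : spectralRadius ℂ a < 1) {c : ℝ}
    (hc : 0 < c) : ∃ n, 0 < n ∧ ‖a ^ n‖ < c :=
  ((eventually_gt_atTop 0).and <|
    (tendsto_pow_atTop_nhds_zero_of_spectralRadius_lt_one h).norm.eventually_lt_const
      (by simpa using hc)).exists

theorem norm_pow_mul_lt {R : Type*} [SeminormedRing R] {b : R} {m k : ℕ} {c : ℝ}
    (hb : ‖b ^ m‖ < c) (hc : c ≤ 1) (hk : 0 < k) : ‖b ^ (m * k)‖ < c :=
  calc ‖b ^ (m * k)‖ = ‖(b ^ m) ^ k‖ := by rw [pow_mul]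
    _ ≤ ‖b ^ m‖ ^ k := norm_pow_le' _ hk
    _ ≤ ‖b ^ m‖ := pow_le_of_le_one (norm_nonneg _) (hb.le.trans hc) hk.ne'
    _ < c := hb

theorem IsCompact.exists_pos_forall_norm_pow_lt {X R : Type*} [TopologicalSpace X]
    [SeminormedRing R] {K : Set X} (hK : IsCompact K) {f : X → R} (hf : ContinuousOn f K)
    {c : ℝ} (hc : c ≤ 1) (h : ∀ x ∈ K, ∃ n, 0 < n ∧ ‖f x ^ n‖ < c) :
    ∃ N, 0 < N ∧ ∀ x ∈ K, ‖f x ^ N‖ < c := by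
  refine hK.induction_on (p := fun S => ∃ N, 0 < N ∧ ∀ x ∈ S, ‖f x ^ N‖ < c)
    ⟨1, one_pos, by simp⟩ (fun S T hST ⟨N, hN, hT⟩ => ⟨N, hN, fun x hx => hT x (hST hx)⟩)
    (fun S T ⟨N, hN, hS⟩ ⟨N', hN', hT⟩ => ⟨N * N', Nat.mul_pos hN hN', ?_⟩) fun x hx => ?_
  · rintro x (hx | hx)
    · exact norm_pow_mul_lt (hS x hx) hc hN'
    · exact mul_comm N N' ▸ norm_pow_mul_lt (hT x hx) hc hN
  · obtain ⟨n, hn, hlt⟩ := h x hx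
    exact ⟨_, ((hf x hx).pow n).norm.eventually_lt_const hlt, n, hn, fun y hy => hy⟩

theorem abs_lt_one_of_bdf3_root {s a : ℝ} (hs0 : 0 ≤ s) (hs : s < 1 / 11)
    (h : a ^ 3 - 18 * s * a ^ 2 + 9 * s * a - 2 * s = 0) : |a| < 1 := by
  have hq : 0 < 18 * a ^ 2 - 9 * a + 2 := by nlinarith [sq_nonneg (4 * a - 1)]
  rw [abs_lt]
  constructor
  · nlinarith [mul_nonneg hs0 hq.le]
  · by_contra! ha
    nlinarith [mul_lt_mul_of_pos_right hs hq, mul_nonneg (sub_nonneg.2 ha) (sq_nonneg a)]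

theorem normSq_lt_one_of_bdf3_nonreal_root {s a b : ℝ} (hs0 : 0 ≤ s) (hs : s < 1 / 11)
    (hb : b ≠ 0)
    (hre : a ^ 3 - 3 * a * b ^ 2 - 18 * s * (a ^ 2 - b ^ 2) + 9 * s * a - 2 * s = 0)
    (him : b * (3 * a ^ 2 - b ^ 2 - 36 * s * a + 9 * s) = 0) : a ^ 2 + b ^ 2 < 1 := by
  have hb2 : b ^ 2 = 3 * a ^ 2 - 36 * s * a + 9 * s := by
    linarith [(mul_eq_zero.mp him).resolve_left hb]
  -- `18s - 2a` is the third (real) root, so Vieta's product formula reads: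
  have hprod : (a ^ 2 + b ^ 2) * (18 * s - 2 * a) = 2 * s := by
    linear_combination hre + a * hb2
  have hm : a ^ 2 + b ^ 2 = (18 * s - 2 * a) * (-2 * a) + 9 * s := by linear_combination hb2
  by_contra! h1
  have hμ0 : 0 ≤ 18 * s - 2 * a := by nlinarith
  have hμ : 18 * s - 2 * a ≤ 2 * s := by nlinarith
  nlinarith [mul_nonneg hμ0 (by linarith : 0 ≤ 2 * a)]

theorem norm_lt_one_of_bdf3_root {s : ℝ} (hs0 : 0 ≤ s) (hs : s < 1 / 11) {l : ℂ}
    (h : l ^ 3 - 18 * s * l ^ 2 + 9 * s * l - 2 * s = 0) : ‖l‖ < 1 := by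
  obtain ⟨a, b⟩ := l
  have hre := congrArg Complex.re h
  have him := congrArg Complex.im h
  simp only [pow_succ, pow_zero, one_mul, Complex.sub_re, Complex.add_re, Complex.mul_re,
    Complex.sub_im, Complex.add_im, Complex.mul_im, Complex.re_ofNat, Complex.im_ofNat,
    Complex.ofReal_re, Complex.ofReal_im, Complex.zero_re, Complex.zero_im] at hre him
  rw [← sq_lt_one_iff₀ (norm_nonneg _), Complex.sq_norm, Complex.normSq_mk]
  rcases eq_or_ne b 0 with rfl | hb
  · have := abs_lt_one_of_bdf3_root hs0 hs (a := a) (by linear_combination hre)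
    nlinarith [abs_mul_abs_self a, abs_nonneg a]
  · have := normSq_lt_one_of_bdf3_nonreal_root hs0 hs hb (a := a) (by linear_combination hre)
      (by linear_combination him)
    linarith

def Mℂ (s : ℝ) : Matrix (Fin 3) (Fin 3) ℂ := (M s).map Complex.ofRealHom

theorem continuous_Mℂ : Continuous Mℂ := by
  refine continuous_matrix fun i j => ?_
  fin_cases i <;> fin_cases j <;> simp [Mℂ, M] <;> fun_prop

theorem bdf3_root_of_mem_spectrum_Mℂ {s : ℝ} {l : ℂ} (hl : l ∈ spectrum ℂ (Mℂ s)) :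
    l ^ 3 - 18 * s * l ^ 2 + 9 * s * l - 2 * s = 0 := by
  rw [mem_spectrum_iff_isRoot_charpoly, Polynomial.IsRoot.def, eval_charpoly,
    det_fin_three] at hl
  simp [Mℂ, M] at hl
  linear_combination hl

theorem spectralRadius_Mℂ_lt_one {s : ℝ} (hs0 : 0 ≤ s) (hs : s < 1 / 11) :
    spectralRadius ℂ (Mℂ s) < 1 := by
  obtain ⟨l, hl, hρ⟩ := spectrum.exists_nnnorm_eq_spectralRadius (Mℂ s)
  rw [← hρ, ENNReal.coe_lt_one_iff, ← NNReal.coe_lt_one, coe_nnnorm]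
  exact norm_lt_one_of_bdf3_root hs0 hs (bdf3_root_of_mem_spectrum_Mℂ hl)

theorem Mℂ_pow_mulVec (s : ℝ) (n : ℕ) (x : Fin 3 → ℝ) :
    Mℂ s ^ n *ᵥ (Complex.ofRealHom ∘ x) = Complex.ofRealHom ∘ (M s ^ n *ᵥ x) := by
  rw [Mℂ, ← RingHom.mapMatrix_apply, ← map_pow]
  funext i
  exact (RingHom.map_mulVec _ _ _ i).symm

theorem enorm3_eq_norm (v : Fin 3 → ℝ) :
    enorm3 v = ‖(EuclideanSpace.equiv (Fin 3) ℂ).symm (Complex.ofRealHom ∘ v)‖ := by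
  simp [enorm3, EuclideanSpace.norm_eq]

theorem enorm3_M_pow_mulVec_le (s : ℝ) (n : ℕ) (x : Fin 3 → ℝ) :
    enorm3 (M s ^ n *ᵥ x) ≤ ‖Mℂ s ^ n‖ * enorm3 x := by
  rw [enorm3_eq_norm, enorm3_eq_norm, ← Mℂ_pow_mulVec]
  exact l2_opNorm_mulVec _ ((EuclideanSpace.equiv (Fin 3) ℂ).symm (Complex.ofRealHom ∘ x))

theorem companion_power_contraction_general (s₀ : ℝ) (hs₀' : s₀ < 1 / 11) :
    ∃ (n₀ : ℕ) (ε₀ : ℝ), 1 ≤ n₀ ∧ 0 < ε₀ ∧ ε₀ < 1 ∧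
      ∀ s : ℝ, 0 < s → s ≤ s₀ → ∀ x : Fin 3 → ℝ, enorm3 x = 1 →
        enorm3 ((M s ^ n₀).mulVec x) ≤ ε₀ := by
  obtain ⟨N, hN, hsmall⟩ := isCompact_Icc.exists_pos_forall_norm_pow_lt
    continuous_Mℂ.continuousOn (by norm_num : (1 / 2 : ℝ) ≤ 1) fun s hs =>
      exists_pos_norm_pow_lt_of_spectralRadius_lt_one
        (spectralRadius_Mℂ_lt_one hs.1 (hs.2.trans_lt hs₀')) (by norm_num)
  refine ⟨N, 1 / 2, hN, by norm_num, by norm_num, fun s hs hss x hx => ?_⟩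
  calc enorm3 (M s ^ N *ᵥ x) ≤ ‖Mℂ s ^ N‖ * enorm3 x := enorm3_M_pow_mulVec_le s N x
    _ ≤ 1 / 2 := by simpa [hx] using (hsmall s ⟨hs.le, hss⟩).le

/-- uniform contraction of powers of the BDF3 companion matrix.
For `0 < s₀ < 1/11` there exist `n₀ ≥ 1` and `ε₀ ∈ (0,1)`, depending only on
`s₀`, such that `|M(s)^{n₀} x| ≤ ε₀` for all `0 < s ≤ s₀` and all unit `x ∈ ℝ³`. -/
theorem companion_power_contraction (s₀ : ℝ) (hs₀ : 0 < s₀) (hs₀' : s₀ < 1 / 11) :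
    ∃ (n₀ : ℕ) (ε₀ : ℝ), 1 ≤ n₀ ∧ 0 < ε₀ ∧ ε₀ < 1 ∧
      ∀ s : ℝ, 0 < s → s ≤ s₀ → ∀ x : Fin 3 → ℝ, enorm3 x = 1 →
        enorm3 ((M s ^ n₀).mulVec x) ≤ ε₀ :=
  companion_power_contraction_general s₀ hs₀'
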